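/- For nonnegative integers a, b with a ≥ b, we have C(a,b) ≥ a/(a+b+1), where C(a,b) = ((a+1)(2a+1)(a+3b+3)) / ((a+b+1)(a+b+2)(2(a+b)+3)). -/
import Mathlib

/-- The leaf-growth split probability `C(a,b)`. -/
def lgC (a b : ℕ) : ℚ :=
  ((a + 1) * (2 * a + 1) * (a + 3 * b + 3)) /
    ((a + b + 1) * (a + b + 2) * (2 * (a + b) + 3))

theorem lgC_ge (a b : ℕ) (hab : a ≥ b) : lgC a b ≥ (a : ℚ) / (a + b + 1) := by
  have hb : (b : ℚ) ≤ a := by exact_mod_cast hab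
  have ha0 : (0:ℚ) ≤ a := Nat.cast_nonneg a
  have hb0 : (0:ℚ) ≤ b := Nat.cast_nonneg b
  unfold lgC
  rw [ge_iff_le, div_le_div_iff₀ (by positivity) (by positivity)]
  nlinarith [mul_nonneg ha0 hb0, mul_nonneg (mul_nonneg ha0 ha0) hb0,
    mul_nonneg (mul_nonneg ha0 hb0) hb0, sq_nonneg ((a:ℚ)-b),
    mul_nonneg ha0 (sub_nonneg.2 hb), mul_nonneg (mul_nonneg ha0 ha0) (sub_nonneg.2 hb),
    mul_nonneg (mul_nonneg ha0 hb0) (sub_nonneg.2 hb)]
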